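/- Let ℓ ≥ 1, k ≥ 0, 1 ≤ p ≤ ℓ, and let μ = (c_1, ..., c_n) be integers with ℓ ≥ c_1 ≥ c_2 ≥ ... ≥ c_n ≥ 0 and Σ_{i=1}^n c_i = 2(kℓ + p). Set Λ = Σ_{i=2k+2}^n c_i (with Λ = 0 if 2k+2 > n). If Λ > p and μ is ℓ-maximal (at least n−3 of the amounts c_i equal ℓ), then there exists exactly one semistandard Young tableau of shape ϱ = (ℓ^{2k}, p, p) with content μ, and this unique tableau is proper. -/

import Mathlib

/-- `IsSSYT R C r n c T` : the filling `T` (entry `T a b` in row `a`, column `b`,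
both 1-indexed) is a semistandard Young tableau of the shape whose `a`-th row
(for `1 ≤ a ≤ R`) consists of the boxes `(a, b)` with `1 ≤ b ≤ r a` (where
`r a ≤ C`), with entries in `{1, ..., n}`, rows weakly increasing, columns
strictly increasing, and using exactly `c i` entries equal to `i` for each
`1 ≤ i ≤ n`. -/
def IsSSYT (R C : ℕ) (r : ℕ → ℕ) (n : ℕ) (c : ℕ → ℕ) (T : ℕ → ℕ → ℕ) : Prop :=
  (∀ a ∈ Finset.Icc 1 R, ∀ b ∈ Finset.Icc 1 (r a), 1 ≤ T a b ∧ T a b ≤ n) ∧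
  (∀ a ∈ Finset.Icc 1 R, ∀ b b' : ℕ, 1 ≤ b → b ≤ b' → b' ≤ r a → T a b ≤ T a b') ∧
  (∀ a : ℕ, 1 ≤ a → a + 1 ≤ R → ∀ b : ℕ, 1 ≤ b → b ≤ r a → b ≤ r (a + 1) →
    T a b < T (a + 1) b) ∧
  (∀ i : ℕ, 1 ≤ i → i ≤ n →
    ((Finset.Icc 1 R ×ˢ Finset.Icc 1 C).filter
      (fun q => q.2 ≤ r q.1 ∧ T q.1 q.2 = i)).card = c i)

/-- Row lengths of the shape `ϱ = (ℓ^{2k}, p, p)`: rows `1, ..., 2k` have length `ℓ`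
and rows `2k+1`, `2k+2` have length `p`. -/
def rhoRow (l k p : ℕ) (a : ℕ) : ℕ := if a ≤ 2 * k then l else p

/-- A semistandard Young tableau of shape `ϱ = (ℓ^{2k}, p, p)` with content
`(c 1, ..., c n)`. -/
def IsRhoSSYT (l k p n : ℕ) (c : ℕ → ℕ) (T : ℕ → ℕ → ℕ) : Prop :=
  IsSSYT (2 * k + 2) l (rhoRow l k p) n c T

/-- A tableau of shape `ϱ = (ℓ^{2k}, p, p)` is proper if `T (q+2) 1 ≥ T q ℓ`
for all `1 ≤ q ≤ 2k`. -/
def IsProper (l k : ℕ) (T : ℕ → ℕ → ℕ) : Prop :=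
  ∀ q : ℕ, 1 ≤ q → q ≤ 2 * k → T q l ≤ T (q + 2) 1

/-- Two fillings agree on every box of the shape with row lengths `r` and `R` rows. -/
def EqOnShape (R : ℕ) (r : ℕ → ℕ) (T T' : ℕ → ℕ → ℕ) : Prop :=
  ∀ a ∈ Finset.Icc 1 R, ∀ b ∈ Finset.Icc 1 (r a), T a b = T' a b

/-- The content `(c 1, ..., c n)` is `ℓ`-maximal if at least `n - 3` of the
amounts `c i` equal `ℓ`. -/
def IsMaximal (l n : ℕ) (c : ℕ → ℕ) : Prop :=
  n - 3 ≤ ((Finset.Icc 1 n).filter (fun i => c i = l)).card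

/-- A filling is normalized if it vanishes outside the boxes of the shape. -/
def Normalized (R : ℕ) (r : ℕ → ℕ) (T : ℕ → ℕ → ℕ) : Prop :=
  ∀ a b : ℕ, ¬ (1 ≤ a ∧ a ≤ R ∧ 1 ≤ b ∧ b ≤ r a) → T a b = 0

/-!
Maximality, monotonicity and the two sums leave only two contents: `(ℓ^{2k}, a, b, d)` with
`b + d > p` (so `a < p`), and `(ℓ^{2k-1}, a, b, d)` with `d > p`. In a semistandard tableau of
shape `ϱ` the entries of row `i` are at least `i`, so a value `i` occurring `ℓ` times fills
row `i` once rows `1, …, i - 1` are constant; thus all rows but the last two, resp. three, are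
constant. Each remaining row is weakly increasing with entries among three consecutive values,
hence determined by how often its smallest and its largest value occur, and the content forces
these numbers. The resulting tableaux are then checked directly, properness included.
-/

open Finset

lemma sum_Icc_one_add_sum_Icc (f : ℕ → ℕ) {j n : ℕ} (hjn : j ≤ n) :
    ∑ i ∈ Icc 1 j, f i + ∑ i ∈ Icc (j + 1) n, f i = ∑ i ∈ Icc 1 n, f i := by
  have h := sum_Ioc_consecutive f (Nat.zero_le j) hjn
  simp only [← Icc_add_one_left_eq_Ioc, zero_add] at h
  exact h

lemma eq_Icc_one_card_of_downClosed {S : Finset ℕ} (hS : ∀ i ∈ S, 1 ≤ i)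
    (hdown : ∀ i j, 1 ≤ i → i ≤ j → j ∈ S → i ∈ S) : S = Icc 1 #S := by
  refine (eq_of_subset_of_card_le (fun j hj => ?_) (by simp)).symm
  rw [mem_Icc] at hj
  by_contra hjS
  have hlt : S ⊆ Icc 1 (j - 1) := fun i hi =>
    mem_Icc.2 ⟨hS i hi, by by_contra! h; exact hjS (hdown j i hj.1 (by omega) hi)⟩
  have := card_le_card hlt
  simp at this
  omega

def stepRow (x A B j : ℕ) : ℕ := if j ≤ A then x else if j ≤ B then x + 1 else x + 2

lemma card_filter_stepRow {x A B L : ℕ} (hAB : A ≤ B) (hBL : B ≤ L) (v : ℕ) :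
    #{j ∈ Icc 1 L | stepRow x A B j = v} =
      if v = x then A else if v = x + 1 then B - A else if v = x + 2 then L - B else 0 := by
  have key : ∀ u w, (∀ j, (1 ≤ j ∧ j ≤ L) ∧ stepRow x A B j = v ↔ u ≤ j ∧ j ≤ w) →
      #{j ∈ Icc 1 L | stepRow x A B j = v} = w + 1 - u := fun u w h => by
    rw [show {j ∈ Icc 1 L | stepRow x A B j = v} = Icc u w by ext j; simpa using h j,
      Nat.card_Icc]
  unfold stepRow at key
  split_ifs
  · exact key 1 A (by intro j; split_ifs <;> omega)
  · exact (key (A + 1) B (by intro j; split_ifs <;> omega)).trans (by omega)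
  · exact (key (B + 1) L (by intro j; split_ifs <;> omega)).trans (by omega)
  · exact key 1 0 (by intro j; split_ifs <;> omega)

lemma eq_stepRow_of_monotoneOn {f : ℕ → ℕ} {L x : ℕ} (hf : MonotoneOn f (Set.Icc 1 L))
    (hx : ∀ j ∈ Icc 1 L, x ≤ f j ∧ f j ≤ x + 2) {j : ℕ} (hj : j ∈ Icc 1 L) :
    f j = stepRow x #{i ∈ Icc 1 L | f i = x} (L - #{i ∈ Icc 1 L | f i = x + 2}) j := by
  have hlow := eq_Icc_one_card_of_downClosed (S := {i ∈ Icc 1 L | f i = x})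
    (fun i hi => (mem_Icc.1 (mem_filter.1 hi).1).1) (fun i i' hi hii' hi' => by
      simp only [mem_filter, mem_Icc] at hi' ⊢
      have := hf ⟨hi, by omega⟩ ⟨by omega, hi'.1.2⟩ hii'
      have := hx i (mem_Icc.2 ⟨hi, by omega⟩)
      exact ⟨⟨hi, by omega⟩, by omega⟩)
  have hmid := eq_Icc_one_card_of_downClosed (S := {i ∈ Icc 1 L | f i ≤ x + 1})
    (fun i hi => (mem_Icc.1 (mem_filter.1 hi).1).1) (fun i i' hi hii' hi' => by
      simp only [mem_filter, mem_Icc] at hi' ⊢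
      have := hf ⟨hi, by omega⟩ ⟨by omega, hi'.1.2⟩ hii'
      exact ⟨⟨hi, by omega⟩, by omega⟩)
  have htop : #{i ∈ Icc 1 L | f i ≤ x + 1} = L - #{i ∈ Icc 1 L | f i = x + 2} := by
    have hsplit := card_filter_add_card_filter_not (s := Icc 1 L) (fun i => f i ≤ x + 1)
    have hnot : {i ∈ Icc 1 L | ¬ f i ≤ x + 1} = {i ∈ Icc 1 L | f i = x + 2} :=
      filter_congr fun i hi => by have := hx i hi; omega
    rw [hnot, Nat.card_Icc] at hsplit
    omega
  have hjlow : j ∈ {i ∈ Icc 1 L | f i = x} ↔ f j = x := by simp [hj]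
  have hjmid : j ∈ {i ∈ Icc 1 L | f i ≤ x + 1} ↔ f j ≤ x + 1 := by simp [hj]
  rw [hlow, mem_Icc] at hjlow
  rw [hmid, mem_Icc, htop] at hjmid
  have := hx j hj
  have := mem_Icc.1 hj
  unfold stepRow
  split_ifs <;> omega

def rowCount (r : ℕ → ℕ) (T : ℕ → ℕ → ℕ) (a v : ℕ) : ℕ := #{j ∈ Icc 1 (r a) | T a j = v}

section rowCount
variable {r : ℕ → ℕ} {T : ℕ → ℕ → ℕ}

lemma card_filter_boxes_eq_sum_rowCount {R C : ℕ} (hrC : ∀ a, r a ≤ C) (v : ℕ) :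
    #{q ∈ Icc 1 R ×ˢ Icc 1 C | q.2 ≤ r q.1 ∧ T q.1 q.2 = v} =
      ∑ a ∈ Icc 1 R, rowCount r T a v := by
  rw [card_filter, sum_product]
  refine sum_congr rfl fun a _ => ?_
  rw [← card_filter, rowCount]
  congr 1
  ext j
  simp only [mem_filter, mem_Icc]
  have := hrC a
  omega

lemma rowCount_of_forall_eq {a : ℕ} (h : ∀ j ∈ Icc 1 (r a), T a j = a) (v : ℕ) :
    rowCount r T a v = if a = v then r a else 0 := by
  rw [rowCount, filter_congr fun j hj => by rw [h j hj]]
  split_ifs <;> simp [*]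

lemma sum_rowCount_of_forall_eq {m L : ℕ} (hr : ∀ q ∈ Icc 1 m, r q = L)
    (hT : ∀ q ∈ Icc 1 m, ∀ j ∈ Icc 1 (r q), T q j = q) (v : ℕ) :
    ∑ q ∈ Icc 1 m, rowCount r T q v = if v ∈ Icc 1 m then L else 0 := by
  rw [sum_congr rfl fun q hq => (rowCount_of_forall_eq (hT q hq) v).trans (by rw [hr q hq])]
  exact sum_ite_eq' _ _ _

end rowCount

namespace IsSSYT
variable {R C n : ℕ} {r c : ℕ → ℕ} {T : ℕ → ℕ → ℕ}

lemma count_eq_sum_rowCount_of_subset (hT : IsSSYT R C r n c T) (hrC : ∀ a, r a ≤ C)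
    {v : ℕ} (hv : v ∈ Icc 1 n) {S : Finset ℕ} (hS : S ⊆ Icc 1 R)
    (hout : ∀ a ∈ Icc 1 R, a ∉ S → ∀ j ∈ Icc 1 (r a), T a j ≠ v) :
    c v = ∑ a ∈ S, rowCount r T a v := by
  rw [← hT.2.2.2 v (mem_Icc.1 hv).1 (mem_Icc.1 hv).2, card_filter_boxes_eq_sum_rowCount hrC]
  exact (sum_subset hS fun a ha haS => card_filter_eq_zero_iff.2 (hout a ha haS)).symm

lemma row_le_entry (hT : IsSSYT R C r n c T) (hr : ∀ a, r (a + 1) ≤ r a) {a j : ℕ}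
    (ha : a ∈ Icc 1 R) (hj : j ∈ Icc 1 (r a)) : a ≤ T a j := by
  induction a generalizing j with
  | zero => simp at ha
  | succ a ih =>
    rcases Nat.eq_zero_or_pos a with rfl | ha0
    · exact (hT.1 1 ha j hj).1
    · simp only [mem_Icc] at ha hj
      have hcol := hT.2.2.1 a ha0 ha.2 j hj.1 (hj.2.trans (hr a)) hj.2
      have := ih (mem_Icc.2 ⟨ha0, by omega⟩) (mem_Icc.2 ⟨hj.1, hj.2.trans (hr a)⟩)
      omega

/-- By strong induction on `a`: the value `a` cannot sit in an earlier row (those are constant)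
nor in a later one (entries there exceed `a`), so all `r a` copies of `a` fill row `a`. -/
lemma entry_eq_row_of_count_eq (hT : IsSSYT R C r n c T) (hrC : ∀ a, r a ≤ C)
    (hr : ∀ a, r (a + 1) ≤ r a) {m : ℕ} (hmR : m ≤ R) (hmn : m ≤ n)
    (hc : ∀ i ∈ Icc 1 m, c i = r i) {a j : ℕ} (ha : a ∈ Icc 1 m) (hj : j ∈ Icc 1 (r a)) :
    T a j = a := by
  induction a using Nat.strong_induction_on generalizing j with
  | _ a ih =>
  have ha' := mem_Icc.1 ha
  have hcount := hT.count_eq_sum_rowCount_of_subset hrC (v := a) (S := {a})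
    (mem_Icc.2 ⟨ha'.1, by omega⟩) (by simpa using ⟨ha'.1, by omega⟩) fun q hq hqa i hi => by
      rcases lt_or_gt_of_ne (mem_singleton.not.1 hqa) with h | h
      · rw [ih q h (mem_Icc.2 ⟨(mem_Icc.1 hq).1, by omega⟩) hi]; omega
      · have := hT.row_le_entry hr hq hi; omega
  rw [sum_singleton, hc a ha, rowCount] at hcount
  exact card_filter_eq_iff.1 (by simpa using hcount.symm) j hj

lemma entry_eq_stepRow (hT : IsSSYT R C r n c T) {a x : ℕ} (ha : a ∈ Icc 1 R)
    (hx : ∀ j ∈ Icc 1 (r a), x ≤ T a j ∧ T a j ≤ x + 2) {j : ℕ} (hj : j ∈ Icc 1 (r a)) :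
    T a j = stepRow x (rowCount r T a x) (r a - rowCount r T a (x + 2)) j :=
  eq_stepRow_of_monotoneOn (fun b hb b' hb' hbb' => hT.2.1 a ha b b' hb.1 hbb' hb'.2) hx hj

end IsSSYT

section rho
variable {l k p : ℕ}

lemma rhoRow_le (hpl : p ≤ l) (a : ℕ) : rhoRow l k p a ≤ l := by
  unfold rhoRow; split_ifs <;> omega

lemma rhoRow_succ_le (hpl : p ≤ l) (a : ℕ) : rhoRow l k p (a + 1) ≤ rhoRow l k p a := by
  unfold rhoRow; split_ifs <;> omega

lemma IsRhoSSYT.entry_eq_row {n : ℕ} {c : ℕ → ℕ} {T : ℕ → ℕ → ℕ}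
    (hT : IsRhoSSYT l k p n c T) (hpl : p ≤ l) {m : ℕ}
    (hm : m ≤ 2 * k) (hmn : m ≤ n) (hc : ∀ i ∈ Icc 1 m, c i = l) {q j : ℕ}
    (hq : q ∈ Icc 1 m) (hj : j ∈ Icc 1 (rhoRow l k p q)) : T q j = q :=
  hT.entry_eq_row_of_count_eq (rhoRow_le hpl) (rhoRow_succ_le hpl) (by omega) hmn
    (fun i hi => by rw [hc i hi, rhoRow, if_pos (by simp at hi; omega)]) hq hj

end rho

section shortRows
variable {l k p a b d : ℕ} {c : ℕ → ℕ} {T : ℕ → ℕ → ℕ}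

/-- Rows `2k+1` and `2k+2` read `(2k+1)^a (2k+2)^(p-a)` and `(2k+2)^(p-d) (2k+3)^d`. -/
def shortRowsTableau (k p a d q j : ℕ) : ℕ :=
  if q ≤ 2 * k then q
  else if q = 2 * k + 1 then stepRow (2 * k + 1) a p j
  else stepRow (2 * k + 1) 0 (p - d) j

lemma isRhoSSYT_shortRowsTableau (hpl : p ≤ l) (hc : ∀ i ∈ Icc 1 (2 * k), c i = l)
    (ha : c (2 * k + 1) = a) (hb : c (2 * k + 2) = b) (hd : c (2 * k + 3) = d)
    (hba : b ≤ a) (hdb : d ≤ b) (hsum : a + b + d = 2 * p) (hΛ : p < b + d) :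
    IsRhoSSYT l k p (2 * k + 3) c (shortRowsTableau k p a d) := by
  refine ⟨fun q hq j hj => ?_, fun q hq j j' hj hjj' hj' => ?_,
    fun q hq hqR j hj hjq hjq' => ?_, fun v hv hvn => ?_⟩
  · simp only [mem_Icc] at hq hj
    unfold shortRowsTableau stepRow rhoRow at *
    split_ifs at * <;> omega
  · simp only [mem_Icc] at hq
    unfold shortRowsTableau stepRow rhoRow at *
    split_ifs at * <;> omega
  · unfold shortRowsTableau stepRow rhoRow at *
    split_ifs at * <;> omega
  · have hrow : ∀ q, 2 * k < q → ∀ v, rowCount (rhoRow l k p) (shortRowsTableau k p a d) q v =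
        #{j ∈ Icc 1 p | shortRowsTableau k p a d q j = v} := fun q hq v => by
      simp only [rowCount, rhoRow, if_neg (show ¬ q ≤ 2 * k by omega)]
    rw [card_filter_boxes_eq_sum_rowCount (rhoRow_le hpl),
      ← sum_Icc_one_add_sum_Icc _ (show 2 * k ≤ 2 * k + 2 by omega),
      sum_rowCount_of_forall_eq (r := rhoRow l k p) (T := shortRowsTableau k p a d) (L := l)
        (fun q hq => if_pos (mem_Icc.1 hq).2) (fun q hq j _ => if_pos (mem_Icc.1 hq).2),
      sum_Icc_succ_top (by omega), Icc_self, sum_singleton, hrow _ (by omega),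
      hrow _ (by omega)]
    simp only [shortRowsTableau, if_neg (show ¬ 2 * k + 1 ≤ 2 * k by omega),
      if_neg (show ¬ 2 * k + 1 + 1 ≤ 2 * k by omega),
      if_neg (show 2 * k + 1 + 1 ≠ 2 * k + 1 by omega),
      if_true]
    rw [card_filter_stepRow (by omega) le_rfl, card_filter_stepRow (by omega) (by omega)]
    obtain hv' | rfl | rfl | rfl : v ≤ 2 * k ∨ v = 2 * k + 1 ∨ v = 2 * k + 2 ∨ v = 2 * k + 3 := by
      omega
    · have := hc v (mem_Icc.2 ⟨hv, hv'⟩)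
      simp only [mem_Icc]
      split_ifs <;> omega
    all_goals simp only [mem_Icc]; split_ifs <;> omega

lemma isProper_shortRowsTableau : IsProper l k (shortRowsTableau k p a d) := by
  intro q hq hqk
  unfold shortRowsTableau stepRow
  split_ifs <;> omega

lemma IsRhoSSYT.shortRows_bounds (hT : IsRhoSSYT l k p (2 * k + 3) c T) (hpl : p ≤ l)
    {j : ℕ} (hj : j ∈ Icc 1 p) :
    2 * k + 1 ≤ T (2 * k + 1) j ∧ T (2 * k + 1) j < T (2 * k + 2) j ∧
      2 * k + 2 ≤ T (2 * k + 2) j ∧ T (2 * k + 2) j ≤ 2 * k + 3 := by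
  have hr1 : rhoRow l k p (2 * k + 1) = p := if_neg (by omega)
  have hr2 : rhoRow l k p (2 * k + 2) = p := if_neg (by omega)
  exact ⟨hT.row_le_entry (rhoRow_succ_le hpl) (by simp) (by rwa [hr1]),
    hT.2.2.1 _ (by omega) le_rfl j (mem_Icc.1 hj).1 (by rw [hr1]; exact (mem_Icc.1 hj).2)
      (by rw [hr2]; exact (mem_Icc.1 hj).2),
    hT.row_le_entry (rhoRow_succ_le hpl) (by simp) (by rwa [hr2]),
    (hT.1 _ (by simp) j (by rwa [hr2])).2⟩

lemma IsRhoSSYT.rowCount_shortRows (hT : IsRhoSSYT l k p (2 * k + 3) c T) (hpl : p ≤ l)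
    (hc : ∀ i ∈ Icc 1 (2 * k), c i = l) :
    rowCount (rhoRow l k p) T (2 * k + 1) (2 * k + 1) = c (2 * k + 1) ∧
      rowCount (rhoRow l k p) T (2 * k + 2) (2 * k + 3) = c (2 * k + 3) := by
  have hrow : ∀ q ∈ Icc 1 (2 * k + 2), ∀ j ∈ Icc 1 (rhoRow l k p q), q ≤ 2 * k → T q j = q :=
    fun q hq j hj hqk => hT.entry_eq_row hpl le_rfl (by omega) hc (by simp at hq ⊢; omega) hj
  have hshort : ∀ q ∈ Icc 1 (2 * k + 2), 2 * k < q → ∀ j ∈ Icc 1 (rhoRow l k p q),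
      j ∈ Icc 1 p := fun q _ hq j hj => by rwa [rhoRow, if_neg (by omega)] at hj
  constructor
  all_goals
    refine ((hT.count_eq_sum_rowCount_of_subset (rhoRow_le hpl) (by simp) (S := {_}) (by simp)
      fun q hq hqS j hj => ?_).trans (sum_singleton _ _)).symm
    simp only [mem_singleton] at hqS
    by_cases hqk : q ≤ 2 * k
    · rw [hrow q hq j hj hqk]; omega
    · have := hT.shortRows_bounds hpl (hshort q hq (by omega) j hj)
      obtain rfl | rfl : q = 2 * k + 1 ∨ q = 2 * k + 2 := by simp at hq; omega
      all_goals omega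

lemma IsRhoSSYT.eqOnShape_shortRowsTableau (hT : IsRhoSSYT l k p (2 * k + 3) c T)
    (hpl : p ≤ l) (hc : ∀ i ∈ Icc 1 (2 * k), c i = l) (ha : c (2 * k + 1) = a)
    (hd : c (2 * k + 3) = d) :
    EqOnShape (2 * k + 2) (rhoRow l k p) T (shortRowsTableau k p a d) := by
  have hr1 : rhoRow l k p (2 * k + 1) = p := if_neg (by omega)
  have hr2 : rhoRow l k p (2 * k + 2) = p := if_neg (by omega)
  obtain ⟨hcount1, hcount3⟩ := hT.rowCount_shortRows hpl hc
  have hbounds := fun j (hj : j ∈ Icc 1 p) => hT.shortRows_bounds hpl hj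
  have hzero1 : rowCount (rhoRow l k p) T (2 * k + 1) (2 * k + 3) = 0 :=
    card_filter_eq_zero_iff.2 fun j hj => by have := hbounds j (by rwa [hr1] at hj); omega
  have hzero2 : rowCount (rhoRow l k p) T (2 * k + 2) (2 * k + 1) = 0 :=
    card_filter_eq_zero_iff.2 fun j hj => by have := hbounds j (by rwa [hr2] at hj); omega
  intro q hq j hj
  obtain hqk | rfl | rfl : q ≤ 2 * k ∨ q = 2 * k + 1 ∨ q = 2 * k + 2 := by simp at hq; omega
  · rw [hT.entry_eq_row hpl le_rfl (by omega) hc (by simp at hq ⊢; omega) hj, shortRowsTableau,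
      if_pos hqk]
  · rw [hT.entry_eq_stepRow hq (x := 2 * k + 1) (fun j hj => by
      have := hbounds j (by rwa [hr1] at hj); omega) hj, hcount1, hzero1, hr1, ha]
    simp [shortRowsTableau]
  · rw [hT.entry_eq_stepRow hq (x := 2 * k + 1) (fun j hj => by
      have := hbounds j (by rwa [hr2] at hj); omega) hj, hcount3, hzero2, hr2, hd]
    simp [shortRowsTableau]

end shortRows

section longRow
variable {l k p a b d : ℕ} {c : ℕ → ℕ} {T : ℕ → ℕ → ℕ}

/-- Row `2k` reads `(2k)^a (2k+1)^(b-p) (2k+2)^(d-p)`; every other row `q` is constant `q`. -/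
def longRowTableau (k l p a d q j : ℕ) : ℕ :=
  if q = 2 * k then stepRow (2 * k) a (l - (d - p)) j else q

lemma isRhoSSYT_longRowTableau (hk : 1 ≤ k) (hpl : p ≤ l)
    (hc : ∀ i ∈ Icc 1 (2 * k - 1), c i = l)
    (ha : c (2 * k) = a) (hb : c (2 * k + 1) = b) (hd : c (2 * k + 2) = d)
    (hba : b ≤ a) (hdb : d ≤ b) (hsum : a + b + d = l + 2 * p) (hΛ : p < d) :
    IsRhoSSYT l k p (2 * k + 2) c (longRowTableau k l p a d) := by
  refine ⟨fun q hq j hj => ?_, fun q hq j j' hj hjj' hj' => ?_,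
    fun q hq hqR j hj hjq hjq' => ?_, fun v hv hvn => ?_⟩
  · simp only [mem_Icc] at hq hj
    unfold longRowTableau stepRow rhoRow at *
    split_ifs at * <;> omega
  · simp only [mem_Icc] at hq
    unfold longRowTableau stepRow rhoRow at *
    split_ifs at * <;> omega
  · unfold longRowTableau stepRow rhoRow at *
    split_ifs at * <;> omega
  · have hconst : ∀ q ≠ 2 * k, ∀ v, rowCount (rhoRow l k p) (longRowTableau k l p a d) q v =
        if q = v then rhoRow l k p q else 0 :=
      fun q hq => rowCount_of_forall_eq fun j _ => if_neg hq
    rw [card_filter_boxes_eq_sum_rowCount (rhoRow_le hpl),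
      ← sum_Icc_one_add_sum_Icc _ (show 2 * k - 1 ≤ 2 * k + 2 by omega),
      sum_rowCount_of_forall_eq (r := rhoRow l k p) (T := longRowTableau k l p a d) (L := l)
        (fun q hq => if_pos (by simp at hq; omega))
        (fun q hq j _ => if_neg (by simp at hq; omega)),
      show 2 * k - 1 + 1 = 2 * k by omega, sum_Icc_succ_top (by omega),
      sum_Icc_succ_top (by omega), Icc_self, sum_singleton, hconst (2 * k + 1) (by omega),
      hconst (2 * k + 1 + 1) (by omega)]
    simp only [rowCount, longRowTableau, if_true, rhoRow, le_refl,
      if_neg (show ¬ 2 * k + 1 ≤ 2 * k by omega), if_neg (show ¬ 2 * k + 1 + 1 ≤ 2 * k by omega)]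
    rw [card_filter_stepRow (by omega) (by omega)]
    obtain hv' | rfl | rfl | rfl : v ≤ 2 * k - 1 ∨ v = 2 * k ∨ v = 2 * k + 1 ∨ v = 2 * k + 2 := by
      omega
    · have := hc v (mem_Icc.2 ⟨hv, hv'⟩)
      simp only [mem_Icc]
      split_ifs <;> omega
    all_goals simp only [mem_Icc]; split_ifs <;> omega

lemma isProper_longRowTableau : IsProper l k (longRowTableau k l p a d) := by
  intro q hq hqk
  unfold longRowTableau stepRow
  split_ifs <;> omega

lemma IsRhoSSYT.entry_eq_row_of_two_mul_lt (hT : IsRhoSSYT l k p (2 * k + 2) c T)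
    (hpl : p ≤ l) {q j : ℕ} (hq : q ∈ Icc (2 * k + 1) (2 * k + 2))
    (hj : j ∈ Icc 1 (rhoRow l k p q)) : T q j = q := by
  have hr := rhoRow_succ_le (k := k) hpl
  have hlast : ∀ j ∈ Icc 1 (rhoRow l k p (2 * k + 2)), T (2 * k + 2) j = 2 * k + 2 :=
    fun j hj => le_antisymm (hT.1 _ (by simp) j hj).2 (hT.row_le_entry hr (by simp) hj)
  obtain rfl | rfl : q = 2 * k + 1 ∨ q = 2 * k + 2 := by simp at hq; omega
  · have hr12 : rhoRow l k p (2 * k + 1 + 1) = rhoRow l k p (2 * k + 1) := by simp [rhoRow]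
    have hcol := hT.2.2.1 (2 * k + 1) (by omega) le_rfl j (mem_Icc.1 hj).1 (mem_Icc.1 hj).2
      (by rw [hr12]; exact (mem_Icc.1 hj).2)
    have := hT.row_le_entry hr (by simp) hj
    rw [hlast j (by rwa [hr12])] at hcol
    omega
  · exact hlast j hj

lemma IsRhoSSYT.rowCount_longRow (hT : IsRhoSSYT l k p (2 * k + 2) c T) (hk : 1 ≤ k)
    (hpl : p ≤ l) (hc : ∀ i ∈ Icc 1 (2 * k - 1), c i = l) :
    rowCount (rhoRow l k p) T (2 * k) (2 * k) = c (2 * k) ∧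
      rowCount (rhoRow l k p) T (2 * k) (2 * k + 2) + p = c (2 * k + 2) := by
  have hrow : ∀ q ∈ Icc 1 (2 * k + 2), ∀ j ∈ Icc 1 (rhoRow l k p q), q ≠ 2 * k → T q j = q :=
    fun q hq j hj hqk => by
      by_cases hq' : q ≤ 2 * k - 1
      · exact hT.entry_eq_row hpl (by omega) (by omega) hc (by simp at hq ⊢; omega) hj
      · exact hT.entry_eq_row_of_two_mul_lt hpl (by simp at hq ⊢; omega) hj
  have hlast : rowCount (rhoRow l k p) T (2 * k + 2) (2 * k + 2) = p := by
    rw [rowCount_of_forall_eq fun j hj => hrow _ (by simp) j hj (by omega), if_pos rfl]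
    exact if_neg (by omega)
  constructor
  · refine ((hT.count_eq_sum_rowCount_of_subset (rhoRow_le hpl) (by simp; omega) (S := {_})
      (by simp; omega) fun q hq hqS j hj => ?_).trans (sum_singleton _ _)).symm
    rw [hrow q hq j hj (by simpa using hqS)]
    simpa using hqS
  · have hcount := hT.count_eq_sum_rowCount_of_subset (rhoRow_le hpl) (v := 2 * k + 2)
      (by simp) (S := {2 * k, 2 * k + 2}) (by intro x hx; simp at hx ⊢; omega)
      fun q hq hqS j hj => by
        simp only [mem_insert, mem_singleton, not_or] at hqS
        rw [hrow q hq j hj hqS.1]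
        exact hqS.2
    rw [sum_pair (by omega), hlast] at hcount
    exact hcount.symm

lemma IsRhoSSYT.eqOnShape_longRowTableau (hT : IsRhoSSYT l k p (2 * k + 2) c T)
    (hk : 1 ≤ k) (hpl : p ≤ l) (hc : ∀ i ∈ Icc 1 (2 * k - 1), c i = l) (ha : c (2 * k) = a)
    (hd : c (2 * k + 2) = d) :
    EqOnShape (2 * k + 2) (rhoRow l k p) T (longRowTableau k l p a d) := by
  obtain ⟨hcount0, hcount2⟩ := hT.rowCount_longRow hk hpl hc
  intro q hq j hj
  by_cases hqk : q = 2 * k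
  · subst hqk
    have hr0 : rhoRow l k p (2 * k) = l := if_pos le_rfl
    have hbounds : ∀ j ∈ Icc 1 (rhoRow l k p (2 * k)),
        2 * k ≤ T (2 * k) j ∧ T (2 * k) j ≤ 2 * k + 2 :=
      fun j hj => ⟨hT.row_le_entry (rhoRow_succ_le hpl) hq hj, (hT.1 _ hq j hj).2⟩
    rw [hT.entry_eq_stepRow hq hbounds hj, hcount0, hr0, longRowTableau, if_pos rfl, ha]
    congr 2
    omega
  · rw [longRowTableau, if_neg hqk]
    by_cases hq' : q ≤ 2 * k - 1
    · exact hT.entry_eq_row hpl (by omega) (by omega) hc (by simp at hq ⊢; omega) hj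
    · exact hT.entry_eq_row_of_two_mul_lt hpl (by simp at hq ⊢; omega) hj

end longRow

section content
variable {l k p n : ℕ} {c : ℕ → ℕ}

lemma eq_of_mem_Icc_card_filter_eq (hbd : ∀ i : ℕ, 1 ≤ i → i ≤ n → c i ≤ l)
    (hmono : ∀ i j : ℕ, 1 ≤ i → i ≤ j → j ≤ n → c j ≤ c i) :
    ∀ i ∈ Icc 1 #{i ∈ Icc 1 n | c i = l}, c i = l := by
  intro i hi
  rw [← eq_Icc_one_card_of_downClosed (fun i hi => (mem_Icc.1 (mem_filter.1 hi).1).1)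
    fun i j hi hij hj => ?_] at hi
  · exact (mem_filter.1 hi).2
  · simp only [mem_filter, mem_Icc] at hj ⊢
    have := hmono i j hi hij hj.1.2
    have := hbd i hi (by omega)
    exact ⟨⟨hi, by omega⟩, by omega⟩

lemma sum_Icc_one_eq_mul_of_forall_eq {m : ℕ} (hfull : ∀ i ∈ Icc 1 m, c i = l) {j : ℕ}
    (hj : j ≤ m) :
    ∑ i ∈ Icc 1 j, c i = j * l := by
  rw [sum_congr rfl fun i hi => hfull i (by simp at hi ⊢; omega)]
  simp

lemma content_cases (hpl : p ≤ l) (hmono : ∀ i j : ℕ, 1 ≤ i → i ≤ j → j ≤ n → c j ≤ c i)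
    (hsum : ∑ i ∈ Icc 1 n, c i = 2 * (k * l + p))
    (hlam : p < ∑ i ∈ Icc (2 * k + 2) n, c i)
    {m : ℕ} (hfull : ∀ i ∈ Icc 1 m, c i = l) (hnm : n ≤ m + 3) :
    (m = 2 * k ∧ n = 2 * k + 3 ∧ c (2 * k + 1) + c (2 * k + 2) + c (2 * k + 3) = 2 * p ∧
        p < c (2 * k + 2) + c (2 * k + 3)) ∨
      (m + 1 = 2 * k ∧ n = 2 * k + 2 ∧ c (2 * k) + c (2 * k + 1) + c (2 * k + 2) = l + 2 * p ∧
        p < c (2 * k + 2)) := by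
  have hn : 2 * k + 2 ≤ n := by
    by_contra h
    rw [Icc_eq_empty (by omega)] at hlam
    simp at hlam
  have hkl : 2 * k * l = 2 * (k * l) := mul_assoc 2 k l
  have hsplit := sum_Icc_one_add_sum_Icc c (show 2 * k + 1 ≤ n by omega)
  rw [hsum, sum_Icc_succ_top (by omega), show 2 * k + 1 + 1 = 2 * k + 2 from rfl] at hsplit
  have hm : m ≤ 2 * k := by
    by_contra h
    rw [sum_Icc_one_eq_mul_of_forall_eq hfull (by omega), hfull _ (by simp; omega)] at hsplit
    omega
  obtain rfl | rfl : n = 2 * k + 2 ∨ n = 2 * k + 3 := by omega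
  · rw [Icc_self, sum_singleton] at hsplit hlam
    have := hmono (2 * k + 1) (2 * k + 2) (by omega) (by omega) le_rfl
    have hm' : m + 1 = 2 * k := by
      by_contra h
      rw [sum_Icc_one_eq_mul_of_forall_eq hfull (show 2 * k ≤ m by omega)] at hsplit
      omega
    rw [← hm', sum_Icc_succ_top (by omega), sum_Icc_one_eq_mul_of_forall_eq hfull le_rfl,
      hm'] at hsplit
    have : m * l + l = 2 * (k * l) := by rw [← add_one_mul, hm', mul_assoc]
    exact Or.inr ⟨hm', rfl, by omega, hlam⟩
  · rw [show 2 * k + 3 = 2 * k + 2 + 1 from rfl, sum_Icc_succ_top (by omega), Icc_self,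
      sum_singleton, show 2 * k + 2 + 1 = 2 * k + 3 from rfl] at hsplit hlam
    rw [sum_Icc_one_eq_mul_of_forall_eq hfull (by omega)] at hsplit
    exact Or.inl ⟨by omega, rfl, by omega, hlam⟩

end content

theorem stmt3_general (l k p n : ℕ) (c : ℕ → ℕ)
    (hpl : p ≤ l)
    (hbd : ∀ i : ℕ, 1 ≤ i → i ≤ n → c i ≤ l)
    (hmono : ∀ i j : ℕ, 1 ≤ i → i ≤ j → j ≤ n → c j ≤ c i)
    (hsum : ∑ i ∈ Finset.Icc 1 n, c i = 2 * (k * l + p))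
    (hlam : p < ∑ i ∈ Finset.Icc (2 * k + 2) n, c i)
    (hmax : IsMaximal l n c) :
    ∃ T : ℕ → ℕ → ℕ, IsRhoSSYT l k p n c T ∧ IsProper l k T ∧
      ∀ T' : ℕ → ℕ → ℕ, IsRhoSSYT l k p n c T' →
        EqOnShape (2 * k + 2) (rhoRow l k p) T' T := by
  set m := #{i ∈ Icc 1 n | c i = l}
  have hfull : ∀ i ∈ Icc 1 m, c i = l := eq_of_mem_Icc_card_filter_eq hbd hmono
  rcases content_cases hpl hmono hsum hlam hfull (by unfold IsMaximal at hmax; omega) with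
    ⟨hm, rfl, hsumA, hΛ⟩ | ⟨hm, rfl, hsumB, hΛ⟩
  · rw [hm] at hfull
    have hba := hmono (2 * k + 1) (2 * k + 2) (by omega) (by omega) (by omega)
    have hdb := hmono (2 * k + 2) (2 * k + 3) (by omega) (by omega) le_rfl
    exact ⟨_, isRhoSSYT_shortRowsTableau hpl hfull rfl rfl rfl hba hdb hsumA hΛ,
      isProper_shortRowsTableau, fun T hT => hT.eqOnShape_shortRowsTableau hpl hfull rfl rfl⟩
  · rw [show m = 2 * k - 1 by omega] at hfull
    have hba := hmono (2 * k) (2 * k + 1) (by omega) (by omega) (by omega)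
    have hdb := hmono (2 * k + 1) (2 * k + 2) (by omega) (by omega) le_rfl
    exact ⟨_, isRhoSSYT_longRowTableau (by omega) hpl hfull rfl rfl rfl hba hdb hsumB hΛ,
      isProper_longRowTableau, fun T hT => hT.eqOnShape_longRowTableau (by omega) hpl hfull rfl rfl⟩

/-- If `Λ > p` and the content is `ℓ`-maximal, there is exactly one semistandard
Young tableau of shape `ϱ = (ℓ^{2k}, p, p)` with content `μ`, and it is proper. -/
theorem stmt3 (l k p n : ℕ) (c : ℕ → ℕ)
    (hl : 1 ≤ l) (hp : 1 ≤ p) (hpl : p ≤ l)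
    (hbd : ∀ i : ℕ, 1 ≤ i → i ≤ n → c i ≤ l)
    (hmono : ∀ i j : ℕ, 1 ≤ i → i ≤ j → j ≤ n → c j ≤ c i)
    (hsum : ∑ i ∈ Finset.Icc 1 n, c i = 2 * (k * l + p))
    (hlam : p < ∑ i ∈ Finset.Icc (2 * k + 2) n, c i)
    (hmax : IsMaximal l n c) :
    ∃ T : ℕ → ℕ → ℕ, IsRhoSSYT l k p n c T ∧ IsProper l k T ∧
      ∀ T' : ℕ → ℕ → ℕ, IsRhoSSYT l k p n c T' →
        EqOnShape (2 * k + 2) (rhoRow l k p) T' T :=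
  stmt3_general l k p n c hpl hbd hmono hsum hlam hmax
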